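/- arXiv:q-alg/9712029 — 2 statements merged into one kernel-verified Lean document; each statement's English description precedes it below -/
import Mathlib

section
/- If F is a cocycle twistor and R a universal R-matrix for A, then R_F = F^{(21)} R F^{-1} is a universal R-matrix for the twisted bialgebra (A, Δ_F, ε): σ(Δ_F(a)) = R_F Δ_F(a) R_F^{-1} for all a ∈ A, (Δ_F ⊗ id)(R_F) = R_F^{(13)} R_F^{(23)}, and (id ⊗ Δ_F)(R_F) = R_F^{(13)} R_F^{(12)}; in particular R_F satisfies the Yang–Baxter equation R_F^{(12)} R_F^{(13)} R_F^{(23)} = R_F^{(23)} R_F^{(13)} R_F^{(12)}. -/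
open scoped TensorProduct

noncomputable section

variable (k A : Type*) [CommRing k] [Ring A] [Bialgebra k A]

/-- `x ⊗ y ↦ x ⊗ y ⊗ 1`. -/
def leg12 : A ⊗[k] A →ₐ[k] A ⊗[k] (A ⊗[k] A) :=
  Algebra.TensorProduct.map (AlgHom.id k A) Algebra.TensorProduct.includeLeft

/-- `x ⊗ y ↦ 1 ⊗ x ⊗ y`. -/
def leg23 : A ⊗[k] A →ₐ[k] A ⊗[k] (A ⊗[k] A) :=
  Algebra.TensorProduct.includeRight

/-- `Δ ⊗ id : A ⊗ A → A ⊗ A ⊗ A`. -/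
def comulLeft : A ⊗[k] A →ₐ[k] A ⊗[k] (A ⊗[k] A) :=
  (Algebra.TensorProduct.assoc k k k A A A).toAlgHom.comp
    (Algebra.TensorProduct.map (Bialgebra.comulAlgHom k A) (AlgHom.id k A))

/-- `id ⊗ Δ : A ⊗ A → A ⊗ A ⊗ A`. -/
def comulRight : A ⊗[k] A →ₐ[k] A ⊗[k] (A ⊗[k] A) :=
  Algebra.TensorProduct.map (AlgHom.id k A) (Bialgebra.comulAlgHom k A)

/-- `ε ⊗ id : A ⊗ A → A`. -/
def counitLeft : A ⊗[k] A →ₐ[k] A :=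
  (Algebra.TensorProduct.lid k A).toAlgHom.comp
    (Algebra.TensorProduct.map (Bialgebra.counitAlgHom k A) (AlgHom.id k A))

/-- `id ⊗ ε : A ⊗ A → A`. -/
def counitRight : A ⊗[k] A →ₐ[k] A :=
  (Algebra.TensorProduct.rid k k A).toAlgHom.comp
    (Algebra.TensorProduct.map (AlgHom.id k A) (Bialgebra.counitAlgHom k A))

/-- The induced map on units of an algebra homomorphism. -/
def uMap {B C : Type*} [Ring B] [Ring C] [Algebra k B] [Algebra k C]
    (f : B →ₐ[k] C) : Bˣ →* Cˣ :=
  Units.map f.toRingHom.toMonoidHom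

variable {k A}

/-- The twisted comultiplication `Δ_F(a) = F Δ(a) F⁻¹`. -/
def twistComul (F : (A ⊗[k] A)ˣ) (a : A) : A ⊗[k] A :=
  Units.val F * Bialgebra.comulAlgHom k A a * Units.val F⁻¹

/-- The twisted coassociator `Φ_F`, as a unit in `A ⊗ A ⊗ A`. -/
def twistAssoc (F : (A ⊗[k] A)ˣ) : (A ⊗[k] (A ⊗[k] A))ˣ :=
  (uMap k (leg23 k A) F * uMap k (comulRight k A) F) *
    (uMap k (leg12 k A) F * uMap k (comulLeft k A) F)⁻¹

/-- `(Δ_F ⊗ id)(X) = F^{(12)} (Δ ⊗ id)(X) F^{(12)⁻¹}` on `A ⊗ A`. -/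
def twistComulLeft (F : (A ⊗[k] A)ˣ) (X : A ⊗[k] A) : A ⊗[k] (A ⊗[k] A) :=
  Units.val (uMap k (leg12 k A) F) * comulLeft k A X *
    Units.val (uMap k (leg12 k A) F)⁻¹

/-- `(id ⊗ Δ_F)(X) = F^{(23)} (id ⊗ Δ)(X) F^{(23)⁻¹}` on `A ⊗ A`. -/
def twistComulRight (F : (A ⊗[k] A)ˣ) (X : A ⊗[k] A) : A ⊗[k] (A ⊗[k] A) :=
  Units.val (uMap k (leg23 k A) F) * comulRight k A X *
    Units.val (uMap k (leg23 k A) F)⁻¹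

variable (k A)

/-- `x ⊗ y ↦ x ⊗ 1 ⊗ y`. -/
def leg13 : A ⊗[k] A →ₐ[k] A ⊗[k] (A ⊗[k] A) :=
  Algebra.TensorProduct.map (AlgHom.id k A) Algebra.TensorProduct.includeRight

/-- the flip `σ : A ⊗ A → A ⊗ A`. -/
def flipT : A ⊗[k] A →ₐ[k] A ⊗[k] A :=
  (Algebra.TensorProduct.comm k A A).toAlgHom

variable {k A}

/-- The twisted R-matrix `R_F = F^{(21)} R F⁻¹`, as a unit in `A ⊗ A`. -/
def twistR (R F : (A ⊗[k] A)ˣ) : (A ⊗[k] A)ˣ :=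
  uMap k (flipT k A) F * R * F⁻¹

/-!
Twisting by `F` is conjugation: `Δ_F ⊗ id = Ad(F^{12}) ∘ (Δ ⊗ id)` and
`id ⊗ Δ_F = Ad(F^{23}) ∘ (id ⊗ Δ)`, so each axiom for `R_F` becomes an identity in the group of
units of `A ⊗ A ⊗ A`. It follows from the cocycle identity transported by permutations of the
three tensor legs, together with quasi-cocommutativity lifted to three legs,
`σ₁₂ ∘ (Δ ⊗ id) = Ad(R^{12}) ∘ (Δ ⊗ id)` and `σ₂₃ ∘ (id ⊗ Δ) = Ad(R^{23}) ∘ (id ⊗ Δ)`: after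
substituting these relations both sides are the same word in the free group. The Yang–Baxter
equation holds for every universal R-matrix of an algebra map `Δ`, in particular for `R_F`.
-/

section Conjugation

variable {B C : Type*} [Ring B] [Ring C] [Algebra k B] [Algebra k C]

@[simp]
lemma uMap_val (f : B →ₐ[k] C) (u : Bˣ) : (uMap k f u : C) = f u := rfl

@[simp]
lemma uMap_inv_val (f : B →ₐ[k] C) (u : Bˣ) : (((uMap k f u)⁻¹ : Cˣ) : C) = f ↑u⁻¹ := rfl

variable (k) in
def conjAlgHom (u : Bˣ) : B →ₐ[k] B :=
  MulSemiringAction.toAlgHom k B (ConjAct.toConjAct u)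

@[simp]
lemma conjAlgHom_apply (u : Bˣ) (x : B) : conjAlgHom k u x = u * x * ↑u⁻¹ := rfl

lemma AlgHom.comp_conjAlgHom (f : B →ₐ[k] C) (u : Bˣ) :
    f.comp (conjAlgHom k u) = (conjAlgHom k (uMap k f u)).comp f := by
  ext; simp

lemma uMap_eq_conj {f g : B →ₐ[k] C} {u : Cˣ} (h : f = (conjAlgHom k u).comp g) (v : Bˣ) :
    uMap k f v = u * uMap k g v * u⁻¹ := by
  subst h; ext; simp

end Conjugation

section Swaps

variable (k) (B : Type*) [Ring B] [Algebra k B]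

def swap12 : B ⊗[k] (B ⊗[k] B) →ₐ[k] B ⊗[k] (B ⊗[k] B) :=
  (Algebra.TensorProduct.leftComm k B B B).toAlgHom

def swap23 : B ⊗[k] (B ⊗[k] B) →ₐ[k] B ⊗[k] (B ⊗[k] B) :=
  Algebra.TensorProduct.map (AlgHom.id k B) (Algebra.TensorProduct.comm k B B).toAlgHom

variable {B}

@[simp]
lemma swap12_tmul (x y z : B) : swap12 k B (x ⊗ₜ[k] (y ⊗ₜ[k] z)) = y ⊗ₜ (x ⊗ₜ z) := rfl

@[simp]
lemma swap23_tmul (x y z : B) : swap23 k B (x ⊗ₜ[k] (y ⊗ₜ[k] z)) = x ⊗ₜ (z ⊗ₜ y) := rfl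

end Swaps

section Legs

@[simp]
lemma leg12_tmul (x y : A) : leg12 k A (x ⊗ₜ[k] y) = x ⊗ₜ (y ⊗ₜ (1 : A)) := rfl

@[simp]
lemma leg13_tmul (x y : A) : leg13 k A (x ⊗ₜ[k] y) = x ⊗ₜ ((1 : A) ⊗ₜ y) := rfl

@[simp]
lemma leg23_tmul (x y : A) : leg23 k A (x ⊗ₜ[k] y) = (1 : A) ⊗ₜ (x ⊗ₜ y) := rfl

@[simp]
lemma flipT_tmul (x y : A) : flipT k A (x ⊗ₜ[k] y) = y ⊗ₜ x := rfl

@[simp]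
lemma swap12_leg12 (X : A ⊗[k] A) : swap12 k A (leg12 k A X) = leg12 k A (flipT k A X) := by
  induction X using TensorProduct.induction_on <;> simp_all

@[simp]
lemma swap12_leg13 (X : A ⊗[k] A) : swap12 k A (leg13 k A X) = leg23 k A X := by
  induction X using TensorProduct.induction_on <;> simp_all

@[simp]
lemma swap12_leg23 (X : A ⊗[k] A) : swap12 k A (leg23 k A X) = leg13 k A X := by
  induction X using TensorProduct.induction_on <;> simp_all

@[simp]
lemma swap23_leg12 (X : A ⊗[k] A) : swap23 k A (leg12 k A X) = leg13 k A X := by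
  induction X using TensorProduct.induction_on <;> simp_all

@[simp]
lemma swap23_leg13 (X : A ⊗[k] A) : swap23 k A (leg13 k A X) = leg12 k A X := by
  induction X using TensorProduct.induction_on <;> simp_all

@[simp]
lemma swap23_leg23 (X : A ⊗[k] A) : swap23 k A (leg23 k A X) = leg23 k A (flipT k A X) := by
  induction X using TensorProduct.induction_on <;> simp_all

lemma leg12_commute (X : A ⊗[k] A) (y : A) :
    Commute (leg12 k A X) ((1 : A) ⊗ₜ[k] ((1 : A) ⊗ₜ[k] y)) := by
  induction X using TensorProduct.induction_on with
  | zero => simp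
  | tmul a b => simp [Commute, SemiconjBy]
  | add X Y hX hY => simpa only [map_add] using hX.add_left hY

lemma leg23_commute (X : A ⊗[k] A) (x : A) :
    Commute (leg23 k A X) (x ⊗ₜ[k] ((1 : A) ⊗ₜ[k] (1 : A))) := by
  simp [leg23, Commute, SemiconjBy, ← Algebra.TensorProduct.one_def]

lemma uMap_swap12_leg13 (u : (A ⊗[k] A)ˣ) :
    uMap k (swap12 k A) (uMap k (leg13 k A) u) = uMap k (leg23 k A) u :=
  Units.ext (swap12_leg13 _)

lemma uMap_swap12_leg23 (u : (A ⊗[k] A)ˣ) :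
    uMap k (swap12 k A) (uMap k (leg23 k A) u) = uMap k (leg13 k A) u :=
  Units.ext (swap12_leg23 _)

lemma uMap_swap23_leg12 (u : (A ⊗[k] A)ˣ) :
    uMap k (swap23 k A) (uMap k (leg12 k A) u) = uMap k (leg13 k A) u :=
  Units.ext (swap23_leg12 _)

end Legs

def comulLeftOf (Δ : A →ₐ[k] A ⊗[k] A) : A ⊗[k] A →ₐ[k] A ⊗[k] (A ⊗[k] A) :=
  (Algebra.TensorProduct.assoc k k k A A A).toAlgHom.comp
    (Algebra.TensorProduct.map Δ (AlgHom.id k A))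

def comulRightOf (Δ : A →ₐ[k] A ⊗[k] A) : A ⊗[k] A →ₐ[k] A ⊗[k] (A ⊗[k] A) :=
  Algebra.TensorProduct.map (AlgHom.id k A) Δ

lemma comulLeftOf_comulAlgHom : comulLeftOf (Bialgebra.comulAlgHom k A) = comulLeft k A := rfl

lemma comulRightOf_comulAlgHom : comulRightOf (Bialgebra.comulAlgHom k A) = comulRight k A := rfl

section Comul
variable (Δ : A →ₐ[k] A ⊗[k] A)

lemma assoc_tmul (X : A ⊗[k] A) (y : A) :
    Algebra.TensorProduct.assoc k k k A A A (X ⊗ₜ[k] y) =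
      leg12 k A X * ((1 : A) ⊗ₜ[k] ((1 : A) ⊗ₜ[k] y)) := by
  induction X using TensorProduct.induction_on with
  | zero => simp
  | tmul a b => simp
  | add X Y hX hY => simp only [TensorProduct.add_tmul, map_add, hX, hY, add_mul]

lemma comulLeftOf_tmul (x y : A) :
    comulLeftOf Δ (x ⊗ₜ[k] y) = leg12 k A (Δ x) * ((1 : A) ⊗ₜ[k] ((1 : A) ⊗ₜ[k] y)) := by
  simp [comulLeftOf, assoc_tmul]

lemma comulRightOf_tmul (x y : A) :
    comulRightOf Δ (x ⊗ₜ[k] y) = (x ⊗ₜ[k] ((1 : A) ⊗ₜ[k] (1 : A))) * leg23 k A (Δ y) := by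
  simp [comulRightOf, leg23, ← Algebra.TensorProduct.one_def]

lemma comulLeftOf_conj (u : (A ⊗[k] A)ˣ) :
    comulLeftOf ((conjAlgHom k u).comp Δ) =
      (conjAlgHom k (uMap k (leg12 k A) u)).comp (comulLeftOf Δ) := by
  refine Algebra.TensorProduct.ext' fun x y => ?_
  simp only [comulLeftOf_tmul, AlgHom.comp_apply, conjAlgHom_apply]
  rw [map_mul, map_mul, mul_assoc _ (leg12 k A _), (leg12_commute _ y).eq]
  simp only [uMap_val, uMap_inv_val, mul_assoc]

lemma comulRightOf_conj (u : (A ⊗[k] A)ˣ) :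
    comulRightOf ((conjAlgHom k u).comp Δ) =
      (conjAlgHom k (uMap k (leg23 k A) u)).comp (comulRightOf Δ) := by
  refine Algebra.TensorProduct.ext' fun x y => ?_
  simp only [comulRightOf_tmul, AlgHom.comp_apply, conjAlgHom_apply]
  rw [map_mul, map_mul, ← mul_assoc, ← mul_assoc, ← (leg23_commute _ x).eq]
  simp only [uMap_val, uMap_inv_val, mul_assoc]

lemma swap12_comp_comulLeftOf :
    (swap12 k A).comp (comulLeftOf Δ) = comulLeftOf ((flipT k A).comp Δ) := by
  refine Algebra.TensorProduct.ext' fun x y => ?_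
  simp [comulLeftOf_tmul]

lemma swap23_comp_comulRightOf :
    (swap23 k A).comp (comulRightOf Δ) = comulRightOf ((flipT k A).comp Δ) := by
  refine Algebra.TensorProduct.ext' fun x y => ?_
  simp [comulRightOf_tmul]

lemma swap23_swap12_comulRightOf (X : A ⊗[k] A) :
    swap23 k A (swap12 k A (comulRightOf Δ X)) = comulLeftOf Δ (flipT k A X) := by
  induction X using TensorProduct.induction_on with
  | zero => simp
  | tmul x y => simpa [comulRightOf_tmul, comulLeftOf_tmul] using (leg12_commute _ _).eq.symm
  | add X Y hX hY => simp only [map_add, hX, hY]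

lemma swap12_swap23_comulLeftOf (X : A ⊗[k] A) :
    swap12 k A (swap23 k A (comulLeftOf Δ X)) = comulRightOf Δ (flipT k A X) := by
  induction X using TensorProduct.induction_on with
  | zero => simp
  | tmul x y => simpa [comulRightOf_tmul, comulLeftOf_tmul] using (leg23_commute _ _).eq
  | add X Y hX hY => simp only [map_add, hX, hY]

end Comul

structure IsUniversalRMatrix (Δ : A →ₐ[k] A ⊗[k] A) (R : (A ⊗[k] A)ˣ) : Prop where
  flipT_comp_eq : (flipT k A).comp Δ = (conjAlgHom k R).comp Δ
  comulLeftOf_eq : uMap k (comulLeftOf Δ) R = uMap k (leg13 k A) R * uMap k (leg23 k A) R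
  comulRightOf_eq : uMap k (comulRightOf Δ) R = uMap k (leg13 k A) R * uMap k (leg12 k A) R

def IsCocycle (Δ : A →ₐ[k] A ⊗[k] A) (F : (A ⊗[k] A)ˣ) : Prop :=
  uMap k (leg12 k A) F * uMap k (comulLeftOf Δ) F =
    uMap k (leg23 k A) F * uMap k (comulRightOf Δ) F

section Cocycle

variable {Δ : A →ₐ[k] A ⊗[k] A} {F : (A ⊗[k] A)ˣ}

lemma IsCocycle.map_swap12 (hF : IsCocycle Δ F) :
    uMap k (leg12 k A) (uMap k (flipT k A) F) * uMap k (swap12 k A) (uMap k (comulLeftOf Δ) F) =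
      uMap k (leg13 k A) F * uMap k (swap12 k A) (uMap k (comulRightOf Δ) F) :=
  Units.ext <| by simpa using congrArg (fun v ↦ swap12 k A v.val) hF

lemma IsCocycle.map_swap23 (hF : IsCocycle Δ F) :
    uMap k (leg13 k A) F * uMap k (swap23 k A) (uMap k (comulLeftOf Δ) F) =
      uMap k (leg23 k A) (uMap k (flipT k A) F) *
        uMap k (swap23 k A) (uMap k (comulRightOf Δ) F) :=
  Units.ext <| by simpa using congrArg (fun v ↦ swap23 k A v.val) hF

lemma IsCocycle.map_swap23_swap12 (hF : IsCocycle Δ F) :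
    uMap k (leg13 k A) (uMap k (flipT k A) F) *
        uMap k (swap23 k A) (uMap k (swap12 k A) (uMap k (comulLeftOf Δ) F)) =
      uMap k (leg12 k A) F * uMap k (comulLeftOf Δ) (uMap k (flipT k A) F) :=
  Units.ext <| by
    simpa [swap23_swap12_comulRightOf] using
      congrArg (fun v ↦ swap23 k A (swap12 k A v.val)) hF

lemma IsCocycle.map_swap12_swap23 (hF : IsCocycle Δ F) :
    uMap k (leg23 k A) F * uMap k (comulRightOf Δ) (uMap k (flipT k A) F) =
      uMap k (leg13 k A) (uMap k (flipT k A) F) *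
        uMap k (swap12 k A) (uMap k (swap23 k A) (uMap k (comulRightOf Δ) F)) :=
  Units.ext <| by
    simpa [swap12_swap23_comulLeftOf] using
      congrArg (fun v ↦ swap12 k A (swap23 k A v.val)) hF

end Cocycle

section RMatrix

variable {Δ : A →ₐ[k] A ⊗[k] A} {R : (A ⊗[k] A)ˣ}

lemma IsUniversalRMatrix.swap12_comulLeftOf (hR : IsUniversalRMatrix Δ R) (X : (A ⊗[k] A)ˣ) :
    uMap k (swap12 k A) (uMap k (comulLeftOf Δ) X) =
      uMap k (leg12 k A) R * uMap k (comulLeftOf Δ) X * (uMap k (leg12 k A) R)⁻¹ :=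
  uMap_eq_conj (f := (swap12 k A).comp (comulLeftOf Δ))
    (by rw [swap12_comp_comulLeftOf, hR.flipT_comp_eq, comulLeftOf_conj]) X

lemma IsUniversalRMatrix.swap23_comulRightOf (hR : IsUniversalRMatrix Δ R) (X : (A ⊗[k] A)ˣ) :
    uMap k (swap23 k A) (uMap k (comulRightOf Δ) X) =
      uMap k (leg23 k A) R * uMap k (comulRightOf Δ) X * (uMap k (leg23 k A) R)⁻¹ :=
  uMap_eq_conj (f := (swap23 k A).comp (comulRightOf Δ))
    (by rw [swap23_comp_comulRightOf, hR.flipT_comp_eq, comulRightOf_conj]) X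

lemma IsUniversalRMatrix.swap23_swap12_comulLeftOf (hR : IsUniversalRMatrix Δ R)
    (X : (A ⊗[k] A)ˣ) :
    uMap k (swap23 k A) (uMap k (swap12 k A) (uMap k (comulLeftOf Δ) X)) =
      uMap k (leg13 k A) R * uMap k (swap23 k A) (uMap k (comulLeftOf Δ) X) *
        (uMap k (leg13 k A) R)⁻¹ := by
  rw [hR.swap12_comulLeftOf, map_mul, map_mul, map_inv, uMap_swap23_leg12]

lemma IsUniversalRMatrix.swap12_swap23_comulRightOf (hR : IsUniversalRMatrix Δ R)
    (X : (A ⊗[k] A)ˣ) :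
    uMap k (swap12 k A) (uMap k (swap23 k A) (uMap k (comulRightOf Δ) X)) =
      uMap k (leg13 k A) R * uMap k (swap12 k A) (uMap k (comulRightOf Δ) X) *
        (uMap k (leg13 k A) R)⁻¹ := by
  rw [hR.swap23_comulRightOf, map_mul, map_mul, map_inv, uMap_swap12_leg23]

lemma IsUniversalRMatrix.yangBaxter (hR : IsUniversalRMatrix Δ R) :
    uMap k (leg12 k A) R * uMap k (leg13 k A) R * uMap k (leg23 k A) R =
      uMap k (leg23 k A) R * uMap k (leg13 k A) R * uMap k (leg12 k A) R := by
  have h := hR.swap12_comulLeftOf R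
  rw [hR.comulLeftOf_eq, map_mul, uMap_swap12_leg13, uMap_swap12_leg23] at h
  rw [h]
  group

lemma IsUniversalRMatrix.twist_flipT_comp (hR : IsUniversalRMatrix Δ R) (F : (A ⊗[k] A)ˣ) :
    (flipT k A).comp ((conjAlgHom k F).comp Δ) =
      (conjAlgHom k (twistR R F)).comp ((conjAlgHom k F).comp Δ) := by
  rw [← AlgHom.comp_assoc, AlgHom.comp_conjAlgHom, AlgHom.comp_assoc, hR.flipT_comp_eq]
  ext a
  simp [twistR, mul_assoc]

variable {F : (A ⊗[k] A)ˣ}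

lemma IsUniversalRMatrix.twist_comulLeftOf (hR : IsUniversalRMatrix Δ R) (hF : IsCocycle Δ F) :
    uMap k (comulLeftOf ((conjAlgHom k F).comp Δ)) (twistR R F) =
      uMap k (leg13 k A) (twistR R F) * uMap k (leg23 k A) (twistR R F) := by
  rw [uMap_eq_conj (comulLeftOf_conj Δ F)]
  simp only [twistR, map_mul, map_inv, hR.comulLeftOf_eq]
  rw [eq_inv_mul_of_mul_eq hF.map_swap23_swap12.symm, hR.swap23_swap12_comulLeftOf,
    eq_inv_mul_of_mul_eq hF.map_swap23, hR.swap23_comulRightOf, eq_inv_mul_of_mul_eq hF]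
  group

lemma IsUniversalRMatrix.twist_comulRightOf (hR : IsUniversalRMatrix Δ R) (hF : IsCocycle Δ F) :
    uMap k (comulRightOf ((conjAlgHom k F).comp Δ)) (twistR R F) =
      uMap k (leg13 k A) (twistR R F) * uMap k (leg12 k A) (twistR R F) := by
  rw [uMap_eq_conj (comulRightOf_conj Δ F)]
  simp only [twistR, map_mul, map_inv, hR.comulRightOf_eq]
  rw [eq_inv_mul_of_mul_eq hF.map_swap12_swap23, hR.swap12_swap23_comulRightOf,
    eq_inv_mul_of_mul_eq hF.map_swap12.symm, hR.swap12_comulLeftOf, eq_inv_mul_of_mul_eq hF.symm]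
  group

theorem IsUniversalRMatrix.twist (hR : IsUniversalRMatrix Δ R) (hF : IsCocycle Δ F) :
    IsUniversalRMatrix ((conjAlgHom k F).comp Δ) (twistR R F) where
  flipT_comp_eq := hR.twist_flipT_comp F
  comulLeftOf_eq := hR.twist_comulLeftOf hF
  comulRightOf_eq := hR.twist_comulRightOf hF

end RMatrix

theorem cocycle_twist_universal_R_general (R F : (A ⊗[k] A)ˣ)
    (hR1 : ∀ a : A, flipT k A (Bialgebra.comulAlgHom k A a) =
      Units.val R * Bialgebra.comulAlgHom k A a * Units.val R⁻¹)
    (hR2 : comulLeft k A (Units.val R) =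
      leg13 k A (Units.val R) * leg23 k A (Units.val R))
    (hR3 : comulRight k A (Units.val R) =
      leg13 k A (Units.val R) * leg12 k A (Units.val R))
    (hcoc : Units.val (uMap k (leg12 k A) F) * comulLeft k A (Units.val F) =
      Units.val (uMap k (leg23 k A) F) * comulRight k A (Units.val F)) :
    -- intertwining property
    (∀ a : A, flipT k A (twistComul F a) =
      Units.val (twistR R F) * twistComul F a * Units.val (twistR R F)⁻¹) ∧
    -- `(Δ_F ⊗ id)(R_F) = R_F^{(13)} R_F^{(23)}`
    twistComulLeft F (Units.val (twistR R F)) =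
      leg13 k A (Units.val (twistR R F)) * leg23 k A (Units.val (twistR R F)) ∧
    -- `(id ⊗ Δ_F)(R_F) = R_F^{(13)} R_F^{(12)}`
    twistComulRight F (Units.val (twistR R F)) =
      leg13 k A (Units.val (twistR R F)) * leg12 k A (Units.val (twistR R F)) ∧
    -- the Yang–Baxter equation
    leg12 k A (Units.val (twistR R F)) * leg13 k A (Units.val (twistR R F)) *
        leg23 k A (Units.val (twistR R F)) =
      leg23 k A (Units.val (twistR R F)) * leg13 k A (Units.val (twistR R F)) *
        leg12 k A (Units.val (twistR R F)) := by
  have hR : IsUniversalRMatrix (Bialgebra.comulAlgHom k A) R :=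
    { flipT_comp_eq := AlgHom.ext hR1
      comulLeftOf_eq := Units.ext hR2
      comulRightOf_eq := Units.ext hR3 }
  have hF : IsCocycle (Bialgebra.comulAlgHom k A) F := Units.ext hcoc
  have hRF := hR.twist hF
  refine ⟨fun a ↦ ?_, ?_, ?_, congrArg Units.val hRF.yangBaxter⟩
  · exact AlgHom.congr_fun hRF.flipT_comp_eq a
  · simpa [twistComulLeft, comulLeftOf_conj, comulLeftOf_comulAlgHom] using
      congrArg Units.val hRF.comulLeftOf_eq
  · simpa [twistComulRight, comulRightOf_conj, comulRightOf_comulAlgHom] using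
      congrArg Units.val hRF.comulRightOf_eq

/-- If `F` is a cocycle twistor and `R` a universal R-matrix for `A`,
then `R_F = F^{(21)} R F⁻¹` is a universal R-matrix for the twisted bialgebra
`(A, Δ_F, ε)`; in particular `R_F` satisfies the Yang–Baxter equation. -/
theorem cocycle_twist_universal_R (R F : (A ⊗[k] A)ˣ)
    (hR1 : ∀ a : A, flipT k A (Bialgebra.comulAlgHom k A a) =
      Units.val R * Bialgebra.comulAlgHom k A a * Units.val R⁻¹)
    (hR2 : comulLeft k A (Units.val R) =
      leg13 k A (Units.val R) * leg23 k A (Units.val R))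
    (hR3 : comulRight k A (Units.val R) =
      leg13 k A (Units.val R) * leg12 k A (Units.val R))
    (hF1 : counitLeft k A (Units.val F) = 1)
    (hF2 : counitRight k A (Units.val F) = 1)
    (hcoc : Units.val (uMap k (leg12 k A) F) * comulLeft k A (Units.val F) =
      Units.val (uMap k (leg23 k A) F) * comulRight k A (Units.val F)) :
    -- intertwining property
    (∀ a : A, flipT k A (twistComul F a) =
      Units.val (twistR R F) * twistComul F a * Units.val (twistR R F)⁻¹) ∧
    -- `(Δ_F ⊗ id)(R_F) = R_F^{(13)} R_F^{(23)}`
    twistComulLeft F (Units.val (twistR R F)) =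
      leg13 k A (Units.val (twistR R F)) * leg23 k A (Units.val (twistR R F)) ∧
    -- `(id ⊗ Δ_F)(R_F) = R_F^{(13)} R_F^{(12)}`
    twistComulRight F (Units.val (twistR R F)) =
      leg13 k A (Units.val (twistR R F)) * leg12 k A (Units.val (twistR R F)) ∧
    -- the Yang–Baxter equation
    leg12 k A (Units.val (twistR R F)) * leg13 k A (Units.val (twistR R F)) *
        leg23 k A (Units.val (twistR R F)) =
      leg23 k A (Units.val (twistR R F)) * leg13 k A (Units.val (twistR R F)) *
        leg12 k A (Units.val (twistR R F)) :=
  cocycle_twist_universal_R_general R F hR1 hR2 hR3 hcoc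

end
end

section
/- The ordered partial products Q_N := M_{2N}(ζ)^{−1} M_{2N−1}(ζ)^{−1} ⋯ M₂(ζ)^{−1} M₁(ζ)^{−1} converge entrywise as N → ∞, and lim_{N→∞} Q_N = φ(ζ²;p) · E(ζ;p), where E(ζ;p) is the 4×4 matrix with entries a_E in positions (1,1) and (4,4), d_E in positions (1,4) and (4,1), b_E in positions (2,2) and (3,3), c_E in positions (2,3) and (3,2), zeros elsewhere, and the entries are determined by a_E ± d_E = (∓ p^{1/2} q ζ; p)_∞ / (∓ p^{1/2} q^{−1} ζ; p)_∞ and b_E ± c_E = (∓ p q ζ; p)_∞ / (∓ p q^{−1} ζ; p)_∞ (upper signs for the sum, lower signs for the difference). -/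
open Matrix

noncomputable section

/-- The q-Pochhammer symbol `(a;t)_∞ = ∏_{k≥0} (1 - a t^k)`. -/
def qpoch (a t : ℂ) : ℂ := ∏' k : ℕ, (1 - a * t ^ k)

/-- The double infinite product `(a;t₁,t₂)_∞ = ∏_{i,j≥0} (1 - a t₁^i t₂^j)`. -/
def qpoch2 (a t₁ t₂ : ℂ) : ℂ := ∏' kl : ℕ × ℕ, (1 - a * t₁ ^ kl.1 * t₂ ^ kl.2)

/-- `ρ(z) = q^{-1/2} (q²z;q⁴)_∞² / ((z;q⁴)_∞ (q⁴z;q⁴)_∞)`. -/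
def rho0 (q sq z : ℂ) : ℂ :=
  sq⁻¹ * qpoch (q ^ 2 * z) (q ^ 4) ^ 2 / (qpoch z (q ^ 4) * qpoch (q ^ 4 * z) (q ^ 4))

/-- `b(z) = (1-z)q/(1-q²z)`. -/
def bbf (q z : ℂ) : ℂ := (1 - z) * q / (1 - q ^ 2 * z)

/-- `c(z) = (1-q²)/(1-q²z)`. -/
def ccf (q z : ℂ) : ℂ := (1 - q ^ 2) / (1 - q ^ 2 * z)

/-- `φ(z;p) = (pz;q⁴,p)_∞ (pq⁴z;q⁴,p)_∞ / (pq²z;q⁴,p)_∞²`. -/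
def phiF (q p z : ℂ) : ℂ :=
  qpoch2 (p * z) (q ^ 4) p * qpoch2 (p * q ^ 4 * z) (q ^ 4) p /
    qpoch2 (p * q ^ 2 * z) (q ^ 4) p ^ 2

/-- `b_l = b(p^l ζ²)`. -/
def bl (q p ζ : ℂ) (l : ℕ) : ℂ := bbf q (p ^ l * ζ ^ 2)

/-- `c_l = p^{l/2} ζ c(p^l ζ²)`. -/
def cl (q p sp ζ : ℂ) (l : ℕ) : ℂ := sp ^ l * ζ * ccf q (p ^ l * ζ ^ 2)

/-- The `l`-th factor `M_l(ζ)` of the infinite product defining the vertex-type twistor. -/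
def Ml (q sq p sp ζ : ℂ) (l : ℕ) : Matrix (Fin 4) (Fin 4) ℂ :=
  rho0 q sq (p ^ l * ζ ^ 2) •
    (if l % 2 = 1 then
      !![bl q p ζ l, 0, 0, cl q p sp ζ l;
         0, 1, 0, 0;
         0, 0, 1, 0;
         cl q p sp ζ l, 0, 0, bl q p ζ l]
    else
      !![1, 0, 0, 0;
         0, bl q p ζ l, cl q p sp ζ l, 0;
         0, cl q p sp ζ l, bl q p ζ l, 0;
         0, 0, 0, 1])

/-- The ordered partial product `Q_N = M_{2N}⁻¹ M_{2N-1}⁻¹ ⋯ M₂⁻¹ M₁⁻¹`. -/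
def Qprod (q sq p sp ζ : ℂ) : ℕ → Matrix (Fin 4) (Fin 4) ℂ
  | 0 => 1
  | N + 1 => (Ml q sq p sp ζ (2 * N + 2))⁻¹ * (Ml q sq p sp ζ (2 * N + 1))⁻¹ *
      Qprod q sq p sp ζ N

/-- `a_E + d_E`. -/
def aPlusdE (q p sp ζ : ℂ) : ℂ := qpoch (-(sp * q * ζ)) p / qpoch (-(sp * q⁻¹ * ζ)) p
/-- `a_E - d_E`. -/
def aMinusdE (q p sp ζ : ℂ) : ℂ := qpoch (sp * q * ζ) p / qpoch (sp * q⁻¹ * ζ) p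
/-- `b_E + c_E`. -/
def bPluscE (q p ζ : ℂ) : ℂ := qpoch (-(p * q * ζ)) p / qpoch (-(p * q⁻¹ * ζ)) p
/-- `b_E - c_E`. -/
def bMinuscE (q p ζ : ℂ) : ℂ := qpoch (p * q * ζ) p / qpoch (p * q⁻¹ * ζ) p

def aE (q p sp ζ : ℂ) : ℂ := (aPlusdE q p sp ζ + aMinusdE q p sp ζ) / 2
def dE (q p sp ζ : ℂ) : ℂ := (aPlusdE q p sp ζ - aMinusdE q p sp ζ) / 2
def bE (q p ζ : ℂ) : ℂ := (bPluscE q p ζ + bMinuscE q p ζ) / 2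
def cE (q p ζ : ℂ) : ℂ := (bPluscE q p ζ - bMinuscE q p ζ) / 2

/-- The matrix `E(ζ;p)`, the image of the vertex-type twistor in the tensor square of
the two-dimensional evaluation representation (without the scalar prefactor `φ(ζ²;p)`). -/
def Emat (q p sp ζ : ℂ) : Matrix (Fin 4) (Fin 4) ℂ :=
  !![aE q p sp ζ, 0, 0, dE q p sp ζ;
     0, bE q p ζ, cE q p ζ, 0;
     0, cE q p ζ, bE q p ζ, 0;
     dE q p sp ζ, 0, 0, aE q p sp ζ]

/-!
Every `M_l`, and `E`, acts diagonally on `v₁⊗v₁ ± v₂⊗v₂, v₁⊗v₂ ± v₂⊗v₁`, so the ordered product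
`Q_N` is diagonal there too, and its eigenvalues are the scalar products
`∏_{k<N} (ρ(p^{2k+1}ζ²) ρ(p^{2k+2}ζ²) (b_l ± c_l))⁻¹` with `l = 2k+1` on the first pair and
`l = 2k+2` on the second. Writing `w = p^{l/2} ζ`, one has `b_l ± c_l = (q ± w)/(1 ± q w)`, and
`ρ(z)⁻¹ = q^{1/2} (z;q⁴)_∞ (q⁴z;q⁴)_∞ / (q²z;q⁴)_∞²`; the two factors `q^{1/2}` cancel the `q` in
`q ± w = q (1 ± q⁻¹ w)`. So each eigenvalue is a partial product over `l ≤ 2N` of the slices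
`(p^l a;q⁴)_∞`, `a ∈ {ζ², q²ζ², q⁴ζ²}`, of the double products in `φ(ζ²;p)`, times a partial
product of `(∓ q x;p)_∞ / (∓ q⁻¹ x;p)_∞` with `x = p^{1/2} ζ` or `x = p ζ`.
-/

open Filter Finset Topology

lemma norm_pow_lt_one {𝕜 : Type*} [NormedDivisionRing 𝕜] {x : 𝕜} (hx : ‖x‖ < 1) {n : ℕ}
    (hn : n ≠ 0) : ‖x ^ n‖ < 1 :=
  (norm_pow x n).trans_lt (pow_lt_one₀ (norm_nonneg x) hx hn)

section QPochhammer

variable {a t t₁ t₂ : ℂ}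

lemma summable_norm_mul_pow (a : ℂ) (ht : ‖t‖ < 1) : Summable (fun k : ℕ => ‖a * t ^ k‖) := by
  simpa [norm_mul, norm_pow] using (summable_geometric_of_lt_one (norm_nonneg t) ht).mul_left ‖a‖

lemma summable_norm_mul_pow_mul_pow (a : ℂ) (ht₁ : ‖t₁‖ < 1) (ht₂ : ‖t₂‖ < 1) :
    Summable (fun kl : ℕ × ℕ => ‖a * t₁ ^ kl.1 * t₂ ^ kl.2‖) := by
  simpa [mul_assoc] using (summable_norm_mul_pow a ht₁).mul_of_nonneg
    (summable_norm_mul_pow 1 ht₂) (fun _ => norm_nonneg _) (fun _ => norm_nonneg _)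

lemma multipliable_one_sub_mul_pow (a : ℂ) (ht : ‖t‖ < 1) :
    Multipliable (fun k : ℕ => 1 - a * t ^ k) := by
  simpa [sub_eq_add_neg] using
    multipliable_one_add_of_summable (f := fun k : ℕ => -(a * t ^ k))
      (by simpa using summable_norm_mul_pow a ht)

lemma qpoch_ne_zero (ht : ‖t‖ < 1) (h : ∀ k : ℕ, 1 - a * t ^ k ≠ 0) : qpoch a t ≠ 0 := by
  simpa [qpoch, sub_eq_add_neg] using
    tprod_one_add_ne_zero_of_summable (f := fun k : ℕ => -(a * t ^ k))
      (by simpa [sub_eq_add_neg] using h) (by simpa using summable_norm_mul_pow a ht)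

lemma qpoch2_ne_zero (ht₁ : ‖t₁‖ < 1) (ht₂ : ‖t₂‖ < 1)
    (h : ∀ i j : ℕ, 1 - a * t₁ ^ i * t₂ ^ j ≠ 0) : qpoch2 a t₁ t₂ ≠ 0 := by
  simpa [qpoch2, sub_eq_add_neg] using
    tprod_one_add_ne_zero_of_summable (f := fun kl : ℕ × ℕ => -(a * t₁ ^ kl.1 * t₂ ^ kl.2))
      (by simpa [sub_eq_add_neg] using fun kl : ℕ × ℕ => h kl.1 kl.2)
      (by simpa using summable_norm_mul_pow_mul_pow a ht₁ ht₂)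

lemma hasProd_qpoch_qpoch2 (ht₁ : ‖t₁‖ < 1) (ht₂ : ‖t₂‖ < 1) :
    HasProd (fun j : ℕ => qpoch (a * t₂ ^ j) t₁) (qpoch2 a t₁ t₂) := by
  have hmult : Multipliable (fun kl : ℕ × ℕ => 1 - a * t₁ ^ kl.1 * t₂ ^ kl.2) := by
    simpa [sub_eq_add_neg] using
      multipliable_one_add_of_summable (f := fun kl : ℕ × ℕ => -(a * t₁ ^ kl.1 * t₂ ^ kl.2))
        (by simpa using summable_norm_mul_pow_mul_pow a ht₁ ht₂)
  refine ((Equiv.prodComm ℕ ℕ).hasProd_iff.mpr hmult.hasProd).prod_fiberwise fun j => ?_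
  simpa [qpoch, mul_right_comm] using (multipliable_one_sub_mul_pow (a * t₂ ^ j) ht₁).hasProd

lemma tendsto_prod_div_qpoch {b : ℂ} (ht : ‖t‖ < 1) (hb : ∀ k : ℕ, 1 - b * t ^ k ≠ 0) :
    Tendsto (fun n => ∏ k ∈ range n, (1 - a * t ^ k) / (1 - b * t ^ k)) atTop
      (𝓝 (qpoch a t / qpoch b t)) := by
  simp only [prod_div_distrib]
  exact ((multipliable_one_sub_mul_pow a ht).hasProd.tendsto_prod_nat).div
    (multipliable_one_sub_mul_pow b ht).hasProd.tendsto_prod_nat (qpoch_ne_zero ht hb)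

end QPochhammer

lemma tendsto_prod_range_pair_mul {M : Type*} [CommMonoid M] [TopologicalSpace M]
    [ContinuousMul M] {f g : ℕ → M} {a b : M}
    (hf : Tendsto (fun n => ∏ l ∈ range n, f l) atTop (𝓝 a))
    (hg : Tendsto (fun n => ∏ k ∈ range n, g k) atTop (𝓝 b)) :
    Tendsto (fun n => ∏ k ∈ range n, f (2 * k) * f (2 * k + 1) * g k) atTop (𝓝 (a * b)) := by
  have hpair : ∀ n, ∏ k ∈ range n, f (2 * k) * f (2 * k + 1) = ∏ l ∈ range (2 * n), f l := by
    intro n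
    induction n with
    | zero => simp
    | succ n ih =>
      rw [prod_range_succ, ih, Nat.mul_succ, prod_range_succ, prod_range_succ, mul_assoc]
  simp only [prod_mul_distrib, hpair]
  exact (hf.comp (tendsto_id.const_mul_atTop' two_pos)).mul hg

def pmBasis : Matrix (Fin 4) (Fin 4) ℂ := !![1, 1, 0, 0; 0, 0, 1, 1; 0, 0, 1, -1; 1, -1, 0, 0]

lemma pmBasis_mul_half_transpose : pmBasis * ((2 : ℂ)⁻¹ • pmBasisᵀ) = 1 := by
  ext i j
  fin_cases i <;> fin_cases j <;> simp [pmBasis, Matrix.mul_apply, Fin.sum_univ_four] <;> norm_num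

lemma half_transpose_mul_pmBasis : ((2 : ℂ)⁻¹ • pmBasisᵀ) * pmBasis = 1 := by
  ext i j
  fin_cases i <;> fin_cases j <;> simp [pmBasis, Matrix.mul_apply, Fin.sum_univ_four] <;> norm_num

/-- The matrix acting by `v 0, v 1, v 2, v 3` on the columns
`v₁⊗v₁ + v₂⊗v₂, v₁⊗v₁ - v₂⊗v₂, v₁⊗v₂ + v₂⊗v₁, v₁⊗v₂ - v₂⊗v₁` of `pmBasis`. -/
def pmDiag : (Fin 4 → ℂ) →* Matrix (Fin 4) (Fin 4) ℂ where
  toFun v := pmBasis * diagonal v * ((2 : ℂ)⁻¹ • pmBasisᵀ)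
  map_one' := by rw [Pi.one_def, diagonal_one, Matrix.mul_one, pmBasis_mul_half_transpose]
  map_mul' v w := by
    rw [Pi.mul_def, ← diagonal_mul_diagonal]
    simp only [Matrix.mul_assoc]
    rw [← Matrix.mul_assoc ((2 : ℂ)⁻¹ • pmBasisᵀ) pmBasis, half_transpose_mul_pmBasis,
      Matrix.one_mul]

lemma continuous_pmDiag : Continuous pmDiag := by
  change Continuous fun v => pmBasis * diagonal v * ((2 : ℂ)⁻¹ • pmBasisᵀ)
  fun_prop

lemma pmDiag_inv {v : Fin 4 → ℂ} (hv : ∀ i, v i ≠ 0) : (pmDiag v)⁻¹ = pmDiag v⁻¹ := by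
  refine Matrix.inv_eq_left_inv ?_
  rw [← map_mul, show v⁻¹ * v = 1 from funext fun i => inv_mul_cancel₀ (hv i), map_one]

lemma pmDiag_smul (c : ℂ) (v : Fin 4 → ℂ) : pmDiag (c • v) = c • pmDiag v := by
  change pmBasis * diagonal (c • v) * _ = c • (pmBasis * diagonal v * _)
  simp only [diagonal_smul, Matrix.mul_smul, Matrix.smul_mul, smul_comm c]

lemma pmDiag_vecCons (w x y z : ℂ) : pmDiag ![w, x, y, z] =
    !![(w + x) / 2, 0, 0, (w - x) / 2;
       0, (y + z) / 2, (y - z) / 2, 0;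
       0, (y - z) / 2, (y + z) / 2, 0;
       (w - x) / 2, 0, 0, (w + x) / 2] := by
  ext i j
  fin_cases i <;> fin_cases j <;>
    simp only [pmDiag, MonoidHom.coe_mk, OneHom.coe_mk, Matrix.mul_apply, Matrix.smul_apply,
      Matrix.transpose_apply, Fin.sum_univ_four] <;>
    simp [pmBasis] <;> ring

section Twistor

variable {q sq p sp ζ z : ℂ}

variable (q) in
def phiFactor (z : ℂ) : ℂ :=
  qpoch z (q ^ 4) * qpoch (q ^ 4 * z) (q ^ 4) / qpoch (q ^ 2 * z) (q ^ 4) ^ 2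

variable (q) in
/-- At `w = ±p^{l/2} ζ` this is `b_l ± c_l`, an eigenvalue of `N_l`. -/
def rEigen (w : ℂ) : ℂ := bbf q (w ^ 2) + w * ccf q (w ^ 2)

lemma rho0_eq_inv (z : ℂ) : rho0 q sq z = (sq * phiFactor q z)⁻¹ := by
  rw [rho0, phiFactor, mul_inv, inv_div, mul_div_assoc]

lemma one_sub_mul_ne_zero_of_ne_inv (hz : ∀ k : ℕ, z ≠ (q ^ (2 * k))⁻¹) (k : ℕ) :
    1 - z * q ^ (2 * k) ≠ 0 := fun h =>
  hz k (eq_inv_of_mul_eq_one_left (by linear_combination -h))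

lemma rho0_ne_zero (hsq : sq ≠ 0) (hq : ‖q‖ < 1) (hz : ∀ k : ℕ, z ≠ (q ^ (2 * k))⁻¹) :
    rho0 q sq z ≠ 0 := by
  have hpoch : ∀ j : ℕ, qpoch (q ^ (2 * j) * z) (q ^ 4) ≠ 0 := fun j =>
    qpoch_ne_zero (norm_pow_lt_one hq four_ne_zero) fun k h =>
      one_sub_mul_ne_zero_of_ne_inv hz (j + 2 * k) (by linear_combination h)
  rw [rho0_eq_inv]
  refine inv_ne_zero (mul_ne_zero hsq (div_ne_zero (mul_ne_zero ?_ ?_) (pow_ne_zero 2 ?_)))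
  · simpa using hpoch 0
  · simpa using hpoch 2
  · simpa using hpoch 1

lemma one_sub_mul_ne_zero_of_rEigen_ne_zero {w : ℂ} (h : rEigen q w ≠ 0) : 1 - q * w ≠ 0 := by
  contrapose! h
  simp [rEigen, bbf, ccf, show 1 - q ^ 2 * w ^ 2 = (1 + q * w) * (1 - q * w) by ring, h]

lemma rEigen_eq {w : ℂ} (hw : 1 - q * w ≠ 0) : rEigen q w = (q + w) / (1 + q * w) := by
  rw [rEigen, bbf, ccf, mul_div_assoc', ← add_div,
    show 1 - q ^ 2 * w ^ 2 = (1 + q * w) * (1 - q * w) by ring,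
    show (1 - w ^ 2) * q + w * (1 - q ^ 2) = (q + w) * (1 - q * w) by ring,
    mul_div_mul_right _ _ hw]

lemma inv_rho0_mul_rho0_mul_rEigen (hq : q ≠ 0) (hsq : sq ^ 2 = q) {w : ℂ} (hw : 1 - q * w ≠ 0)
    (z₁ z₂ : ℂ) :
    (rho0 q sq z₂ * rho0 q sq z₁ * rEigen q w)⁻¹ =
      phiFactor q z₁ * phiFactor q z₂ * ((1 + q * w) / (1 + q⁻¹ * w)) := by
  rw [rho0_eq_inv, rho0_eq_inv, rEigen_eq hw, show q + w = q * (1 + q⁻¹ * w) by field_simp]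
  generalize 1 + q⁻¹ * w = d
  calc _ = sq ^ 2 * q⁻¹ * (phiFactor q z₁ * phiFactor q z₂ * ((1 + q * w) / d)) := by
        simp only [mul_inv, inv_inv, inv_div]
        ring
    _ = _ := by rw [hsq, mul_inv_cancel₀ hq, one_mul]

lemma tendsto_prod_phiFactor (hq : ‖q‖ < 1) (hp : ‖p‖ < 1)
    (hz : qpoch2 (p * q ^ 2 * z) (q ^ 4) p ≠ 0) :
    Tendsto (fun n => ∏ l ∈ range n, phiFactor q (p ^ (l + 1) * z)) atTop (𝓝 (phiF q p z)) := by
  have hslice : ∀ a : ℂ, Tendsto (fun n => ∏ l ∈ range n, qpoch (a * (p ^ (l + 1) * z)) (q ^ 4))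
      atTop (𝓝 (qpoch2 (p * a * z) (q ^ 4) p)) := fun a => by
    simpa [pow_succ, mul_comm, mul_left_comm, mul_assoc] using
      (hasProd_qpoch_qpoch2 (a := p * a * z) (norm_pow_lt_one hq four_ne_zero) hp).tendsto_prod_nat
  have h1 := hslice 1
  simp only [one_mul, mul_one] at h1
  simp only [phiFactor, prod_div_distrib, prod_mul_distrib, prod_pow]
  exact (h1.mul (hslice (q ^ 4))).div ((hslice (q ^ 2)).pow 2) (pow_ne_zero 2 hz)

lemma tendsto_prod_inv_rho0_mul_rEigen (hq0 : q ≠ 0) (hsq : sq ^ 2 = q) (hq : ‖q‖ < 1)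
    (hp : ‖p‖ < 1) (hφ : qpoch2 (p * q ^ 2 * ζ ^ 2) (q ^ 4) p ≠ 0) {c : ℂ}
    (hc : ∀ k : ℕ, rEigen q (c * ζ * p ^ k) ≠ 0) :
    Tendsto (fun n => ∏ k ∈ range n,
        (rho0 q sq (p ^ (2 * k + 2) * ζ ^ 2) * rho0 q sq (p ^ (2 * k + 1) * ζ ^ 2) *
          rEigen q (c * ζ * p ^ k))⁻¹) atTop
      (𝓝 (phiF q p (ζ ^ 2) * (qpoch (-(c * q * ζ)) p / qpoch (-(c * q⁻¹ * ζ)) p))) := by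
  have hw := fun k => one_sub_mul_ne_zero_of_rEigen_ne_zero (hc k)
  have hden : ∀ k : ℕ, 1 - -(c * q⁻¹ * ζ) * p ^ k ≠ 0 := fun k h => by
    have hr := hc k
    rw [rEigen_eq (hw k), show q + c * ζ * p ^ k = q * (1 - -(c * q⁻¹ * ζ) * p ^ k) by
      field_simp; ring, h] at hr
    simp at hr
  refine (tendsto_prod_range_pair_mul (tendsto_prod_phiFactor hq hp hφ)
    (tendsto_prod_div_qpoch hp hden)).congr fun n => prod_congr rfl fun k _ => ?_
  rw [inv_rho0_mul_rho0_mul_rEigen hq0 hsq (hw k)]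
  ring

def eigenvaluesMl (q sq p sp ζ : ℂ) (l : ℕ) : Fin 4 → ℂ :=
  rho0 q sq (p ^ l * ζ ^ 2) •
    if l % 2 = 1 then ![bl q p ζ l + cl q p sp ζ l, bl q p ζ l - cl q p sp ζ l, 1, 1]
    else ![1, 1, bl q p ζ l + cl q p sp ζ l, bl q p ζ l - cl q p sp ζ l]

lemma Ml_eq_pmDiag (l : ℕ) : Ml q sq p sp ζ l = pmDiag (eigenvaluesMl q sq p sp ζ l) := by
  rw [Ml, eigenvaluesMl, pmDiag_smul]
  congr 1
  split_ifs <;> rw [pmDiag_vecCons] <;> ext i j <;> fin_cases i <;> fin_cases j <;> simp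

lemma smul_Emat_eq_pmDiag (c : ℂ) : c • Emat q p sp ζ =
    pmDiag (c • ![aPlusdE q p sp ζ, aMinusdE q p sp ζ, bPluscE q p ζ, bMinuscE q p ζ]) := by
  rw [pmDiag_smul, pmDiag_vecCons]
  rfl

lemma eigenvaluesMl_ne_zero (hsq : sq ≠ 0) (hq : ‖q‖ < 1) {l : ℕ}
    (hz : ∀ k : ℕ, p ^ l * ζ ^ 2 ≠ (q ^ (2 * k))⁻¹) (hbc : bl q p ζ l ^ 2 ≠ cl q p sp ζ l ^ 2)
    (i : Fin 4) : eigenvaluesMl q sq p sp ζ l i ≠ 0 := by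
  have hρ := rho0_ne_zero hsq hq hz
  obtain ⟨hadd, hsub⟩ := mul_ne_zero_iff.mp ((sq_sub_sq _ _).symm.trans_ne (sub_ne_zero.mpr hbc))
  unfold eigenvaluesMl
  split_ifs <;> fin_cases i <;> simp [hρ, hadd, hsub]

lemma Qprod_eq_pmDiag (h : ∀ l, 1 ≤ l → ∀ i, eigenvaluesMl q sq p sp ζ l i ≠ 0) (N : ℕ) :
    Qprod q sq p sp ζ N = pmDiag (∏ k ∈ range N,
      (eigenvaluesMl q sq p sp ζ (2 * k + 2) * eigenvaluesMl q sq p sp ζ (2 * k + 1))⁻¹) := by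
  induction N with
  | zero => simp [Qprod]
  | succ N ih =>
    rw [Qprod, ih, Ml_eq_pmDiag, Ml_eq_pmDiag, pmDiag_inv (h _ (by omega)),
      pmDiag_inv (h _ (by omega)), ← map_mul, ← map_mul, prod_range_succ_comm, mul_inv]

lemma bl_add_cl (hsp : sp ^ 2 = p) (l : ℕ) :
    bl q p ζ l + cl q p sp ζ l = rEigen q (sp ^ l * ζ) := by
  rw [bl, cl, rEigen, ← hsp]
  ring_nf

lemma bl_sub_cl (hsp : sp ^ 2 = p) (l : ℕ) :
    bl q p ζ l - cl q p sp ζ l = rEigen q (-(sp ^ l * ζ)) := by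
  rw [bl, cl, rEigen, ← hsp]
  ring_nf

lemma eigenvaluesMl_mul_apply (hsp : sp ^ 2 = p) (k : ℕ) (i : Fin 4) :
    (eigenvaluesMl q sq p sp ζ (2 * k + 2) * eigenvaluesMl q sq p sp ζ (2 * k + 1)) i =
      rho0 q sq (p ^ (2 * k + 2) * ζ ^ 2) * rho0 q sq (p ^ (2 * k + 1) * ζ ^ 2) *
        rEigen q (![sp, -sp, p, -p] i * ζ * p ^ k) := by
  have hodd : sp ^ (2 * k + 1) * ζ = sp * ζ * p ^ k := by rw [← hsp]; ring
  have heven : sp ^ (2 * k + 2) * ζ = p * ζ * p ^ k := by rw [← hsp]; ring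
  simp only [eigenvaluesMl, bl_add_cl hsp, bl_sub_cl hsp, hodd, heven]
  fin_cases i <;> simp [Nat.add_mod] <;> ring

end Twistor

theorem vertex_twistor_product_converges_general (q sq p sp ζ : ℂ)
    (hq0 : 0 < ‖q‖) (hq1 : ‖q‖ < 1)
    (hp1 : ‖p‖ < 1)
    (hsq : sq ^ 2 = q) (hsp : sp ^ 2 = p)
    (hgen : ∀ l : ℕ, 1 ≤ l →
      (∀ k : ℕ, p ^ l * ζ ^ 2 ≠ (q ^ (2 * k))⁻¹) ∧
      (bl q p ζ l) ^ 2 ≠ (cl q p sp ζ l) ^ 2) :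
    Filter.Tendsto (Qprod q sq p sp ζ) Filter.atTop
      (nhds (phiF q p (ζ ^ 2) • Emat q p sp ζ)) := by
  have hq : q ≠ 0 := norm_pos_iff.mp hq0
  have hsq0 : sq ≠ 0 := by rintro rfl; exact hq (by simp [← hsq])
  have heig : ∀ l, 1 ≤ l → ∀ i, eigenvaluesMl q sq p sp ζ l i ≠ 0 := fun l hl =>
    eigenvaluesMl_ne_zero hsq0 hq1 (hgen l hl).1 (hgen l hl).2
  have hφ : qpoch2 (p * q ^ 2 * ζ ^ 2) (q ^ 4) p ≠ 0 :=
    qpoch2_ne_zero (norm_pow_lt_one hq1 four_ne_zero) hp1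
      fun i j h => one_sub_mul_ne_zero_of_ne_inv (hgen (j + 1) (by omega)).1 (2 * i + 1)
        (by linear_combination h)
  have hc : ∀ i k, rEigen q (![sp, -sp, p, -p] i * ζ * p ^ k) ≠ 0 := fun i k => by
    have h := mul_ne_zero (heig (2 * k + 2) (by omega) i) (heig (2 * k + 1) (by omega) i)
    rw [← Pi.mul_apply, eigenvaluesMl_mul_apply hsp] at h
    exact right_ne_zero_of_mul h
  rw [funext (Qprod_eq_pmDiag heig), smul_Emat_eq_pmDiag]
  refine (continuous_pmDiag.tendsto _).comp (tendsto_pi_nhds.2 fun i => ?_)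
  simp only [prod_apply, Pi.inv_apply, eigenvaluesMl_mul_apply hsp]
  convert tendsto_prod_inv_rho0_mul_rEigen hq hsq hq1 hp1 hφ (hc i) using 2
  fin_cases i <;> simp [aPlusdE, aMinusdE, bPluscE, bMinuscE]

/-- The ordered partial products `Q_N = M_{2N}⁻¹ ⋯ M₁⁻¹` converge
entrywise as `N → ∞`, with limit `φ(ζ²;p) E(ζ;p)`. -/
theorem vertex_twistor_product_converges (q sq p sp ζ : ℂ)
    (hq0 : 0 < ‖q‖) (hq1 : ‖q‖ < 1)
    (hp0 : 0 < ‖p‖) (hp1 : ‖p‖ < 1)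
    (hsq : sq ^ 2 = q) (hsp : sp ^ 2 = p)
    (hgen : ∀ l : ℕ, 1 ≤ l →
      (∀ k : ℕ, p ^ l * ζ ^ 2 ≠ (q ^ (2 * k))⁻¹) ∧
      (bl q p ζ l) ^ 2 ≠ (cl q p sp ζ l) ^ 2) :
    Filter.Tendsto (Qprod q sq p sp ζ) Filter.atTop
      (nhds (phiF q p (ζ ^ 2) • Emat q p sp ζ)) :=
  vertex_twistor_product_converges_general q sq p sp ζ hq0 hq1 hp1 hsq hsp hgen

end
end
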